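/- Let d ≥ 2, r > 0, and let K, L ⊆ ℝ^d be nonempty compact sets. Then the Lebesgue measure of the Minkowski sum of the r-parallel sets K_{⊕r} and L_{⊕r} satisfies λ(K_{⊕r} ⊕ L_{⊕r}) ≤ λ(K_{⊕r}) · λ(L_{⊕r}) · 2^{4d} / (ω_d r^d). -/

import Mathlib

open MeasureTheory Set Filter
open scoped ENNReal Pointwise

/-- The closed unit Euclidean ball in `ℝ^d`. -/
noncomputable def unitBall (d : ℕ) : Set (EuclideanSpace ℝ (Fin d)) := Metric.closedBall 0 1

/-- `ω_d = π^{d/2}/Γ(1+d/2)`, the volume of the unit Euclidean ball in `ℝ^d`. -/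
noncomputable def omegaVol (d : ℕ) : ℝ := Real.pi ^ ((d : ℝ) / 2) / Real.Gamma (1 + (d : ℝ) / 2)

/-!
A maximal `r`-separated subset `S` of `K` is finite by compactness. It is an `r`-net, so
`K_{⊕r} ⊆ S ⊕ 2rB`, while the balls of radius `r/2` around its points are disjoint and lie in
`K_{⊕r}`, so `#S · λ(r/2 · B) ≤ λ(K_{⊕r})`. With `T` chosen likewise for `L`,
`K_{⊕r} ⊕ L_{⊕r} ⊆ (S ⊕ T) ⊕ 4rB`, whence
`λ(K_{⊕r} ⊕ L_{⊕r}) ≤ #S · #T · λ(4r · B) ≤ λ(K_{⊕r}) λ(L_{⊕r}) λ(4r · B) / λ(r/2 · B)²`,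
and the last ratio is `2^{4d} / (ω_d r^d)`.
-/

open Metric
open scoped NNReal

theorem IsCompact.packingNumber_ne_top {X : Type*} [PseudoEMetricSpace X] {A : Set X}
    (hA : IsCompact A) {ε : ℝ≥0} (hε : ε ≠ 0) : packingNumber ε A ≠ ⊤ := by
  obtain ⟨N, -, hN, hcover⟩ := exists_finite_isCover_of_isCompact (ε := ε / 2) (by simpa) hA
  refine ne_top_of_le_ne_top hN.encard_lt_top.ne ?_
  calc packingNumber ε A = packingNumber (2 * (ε / 2)) A := by rw [mul_div_cancel₀ _ two_ne_zero]
    _ ≤ externalCoveringNumber (ε / 2) A := packingNumber_two_mul_le_externalCoveringNumber _ _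
    _ ≤ N.encard := hcover.externalCoveringNumber_le_encard

theorem IsCompact.exists_finset_isSeparated_isCover {X : Type*} [PseudoEMetricSpace X]
    {A : Set X} (hA : IsCompact A) {ε : ℝ≥0} (hε : ε ≠ 0) :
    ∃ S : Finset X, ↑S ⊆ A ∧ IsSeparated ε (S : Set X) ∧ IsCover ε A S := by
  have hfin := hA.packingNumber_ne_top hε
  have hS : (maximalSeparatedSet ε A).Finite := by
    rw [← Set.encard_ne_top_iff, encard_maximalSeparatedSet hfin]
    exact hfin
  exact ⟨hS.toFinset, by simpa using maximalSeparatedSet_subset,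
    by simpa using isSeparated_maximalSeparatedSet, by simpa using isCover_maximalSeparatedSet hfin⟩

section Translates

variable {G : Type*} [AddGroup G] [MeasurableSpace G] (μ : Measure G) [μ.IsAddLeftInvariant]

theorem measure_finset_add_le (S : Finset G) (t : Set G) : μ (↑S + t) ≤ S.card * μ t := by
  calc μ (↑S + t) = μ (⋃ a ∈ S, a +ᵥ t) := by rw [← iUnion_add_left_image]; rfl
    _ ≤ ∑ a ∈ S, μ (a +ᵥ t) := measure_biUnion_finset_le S _
    _ = S.card * μ t := by simp [measure_vadd]

theorem measure_finset_add_of_pairwiseDisjoint [MeasurableAdd G] (S : Finset G) {t : Set G}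
    (ht : MeasurableSet t) (hS : (S : Set G).PairwiseDisjoint (· +ᵥ t)) :
    μ (↑S + t) = S.card * μ t := by
  calc μ (↑S + t) = μ (⋃ a ∈ S, a +ᵥ t) := by rw [← iUnion_add_left_image]; rfl
    _ = ∑ a ∈ S, μ (a +ᵥ t) := measure_biUnion_finset hS fun a _ ↦ ht.const_vadd a
    _ = S.card * μ t := by simp [measure_vadd]

end Translates

section ParallelSets

variable {E : Type*} [SeminormedAddCommGroup E]

theorem closedBall_zero_add_closedBall_zero_subset (a b : ℝ) :
    closedBall (0 : E) a + closedBall 0 b ⊆ closedBall 0 (a + b) := by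
  rintro _ ⟨x, hx, y, hy, rfl⟩
  rw [mem_closedBall_zero_iff] at hx hy ⊢
  exact (norm_add_le x y).trans (add_le_add hx hy)

theorem Metric.IsCover.add_closedBall_zero_subset {ε : ℝ≥0} {A N : Set E} (h : IsCover ε A N)
    (ρ : ℝ) : A + closedBall 0 ρ ⊆ N + closedBall 0 (ε + ρ) := by
  have hAN : A ⊆ N + closedBall 0 ε := fun x hx ↦ by
    obtain ⟨y, hy, hxy⟩ := mem_iUnion₂.mp (h.subset_iUnion_closedBall hx)
    exact ⟨y, hy, x - y, by simpa [dist_eq_norm] using hxy, add_sub_cancel y x⟩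
  calc A + closedBall (0 : E) ρ ⊆ N + closedBall 0 ε + closedBall 0 ρ := add_subset_add_right hAN
    _ ⊆ N + closedBall 0 (ε + ρ) := by
      rw [add_assoc]
      exact add_subset_add_left (closedBall_zero_add_closedBall_zero_subset _ _)

theorem Metric.IsSeparated.pairwiseDisjoint_ball {ε : ℝ≥0} {S : Set E} (h : IsSeparated ε S) :
    S.PairwiseDisjoint (· +ᵥ ball (0 : E) (ε / 2)) := by
  intro x hx y hy hxy
  have hdist : (ε : ℝ) < dist x y := by
    have : (ε : ℝ≥0∞) < edist x y := h hx hy hxy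
    rwa [edist_nndist, ENNReal.coe_lt_coe, ← NNReal.coe_lt_coe, coe_nndist] at this
  simp only [vadd_ball_zero]
  exact ball_disjoint_ball (by linarith)

variable [MeasurableSpace E] [OpensMeasurableSpace E] [MeasurableAdd E]
  (μ : Measure E) [μ.IsAddLeftInvariant]

theorem Metric.IsSeparated.card_mul_measure_ball_le {ε : ℝ≥0} {S : Finset E} {A : Set E}
    (hS : IsSeparated ε (S : Set E)) (hSA : ↑S ⊆ A) :
    S.card * μ (ball 0 (ε / 2)) ≤ μ (A + closedBall 0 ε) := by
  rw [← measure_finset_add_of_pairwiseDisjoint μ S measurableSet_ball hS.pairwiseDisjoint_ball]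
  refine measure_mono (add_subset_add hSA fun x hx ↦ ?_)
  exact ball_subset_closedBall (ball_subset_ball (by linarith [ε.2]) hx)

theorem measure_add_add_closedBall_mul_sq_le {K L : Set E} (hK : IsCompact K) (hL : IsCompact L)
    {r : ℝ} (hr : 0 < r) :
    μ ((K + closedBall 0 r) + (L + closedBall 0 r)) * μ (ball 0 (r / 2)) ^ 2 ≤
      μ (K + closedBall 0 r) * μ (L + closedBall 0 r) * μ (closedBall 0 (4 * r)) := by
  classical
  lift r to ℝ≥0 using hr.le
  have hr0 : r ≠ 0 := by exact_mod_cast hr.ne'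
  obtain ⟨S, hSK, hSsep, hScov⟩ := hK.exists_finset_isSeparated_isCover hr0
  obtain ⟨T, hTL, hTsep, hTcov⟩ := hL.exists_finset_isSeparated_isCover hr0
  have hsum : K + closedBall 0 r + (L + closedBall 0 r) ⊆
      ((S + T : Finset E) : Set E) + closedBall 0 (4 * r) :=
    calc K + closedBall (0 : E) r + (L + closedBall (0 : E) r)
        ⊆ S + closedBall (0 : E) (r + r) + (T + closedBall (0 : E) (r + r)) :=
          add_subset_add (hScov.add_closedBall_zero_subset r) (hTcov.add_closedBall_zero_subset r)
      _ = ((S + T : Finset E) : Set E) + (closedBall 0 (r + r) + closedBall 0 (r + r)) := by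
          rw [Finset.coe_add, add_add_add_comm]
      _ ⊆ ((S + T : Finset E) : Set E) + closedBall 0 (4 * r) := by
          convert add_subset_add_left (closedBall_zero_add_closedBall_zero_subset _ _) using 3
          ring
  have hcover : μ (K + closedBall 0 r + (L + closedBall 0 r)) ≤
      S.card * T.card * μ (closedBall 0 (4 * r)) :=
    calc μ (K + closedBall (0 : E) r + (L + closedBall (0 : E) r))
        ≤ μ (((S + T : Finset E) : Set E) + closedBall 0 (4 * r)) := measure_mono hsum
      _ ≤ (S + T).card * μ (closedBall (0 : E) (4 * r)) := measure_finset_add_le μ _ _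
      _ ≤ S.card * T.card * μ (closedBall (0 : E) (4 * r)) := by
          gcongr
          exact_mod_cast Finset.card_add_le
  calc μ ((K + closedBall 0 r) + (L + closedBall 0 r)) * μ (ball 0 (r / 2)) ^ 2
      ≤ S.card * T.card * μ (closedBall 0 (4 * r)) * μ (ball 0 (r / 2)) ^ 2 := by gcongr
    _ = (S.card * μ (ball 0 (r / 2))) * (T.card * μ (ball 0 (r / 2))) *
          μ (closedBall 0 (4 * r)) := by ring
    _ ≤ μ (K + closedBall 0 r) * μ (L + closedBall 0 r) * μ (closedBall 0 (4 * r)) := by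
        gcongr
        · exact hSsep.card_mul_measure_ball_le μ hSK
        · exact hTsep.card_mul_measure_ball_le μ hTL

end ParallelSets

theorem volume_ball_zero_one_eq_omegaVol (d : ℕ) :
    volume (ball (0 : EuclideanSpace ℝ (Fin d)) 1) = ENNReal.ofReal (omegaVol d) := by
  rcases Nat.eq_zero_or_pos d with rfl | hd
  · have huniv : ball (0 : EuclideanSpace ℝ (Fin 0)) 1 = univ :=
      Subsingleton.eq_univ_of_nonempty ⟨0, mem_ball_self one_pos⟩
    rw [huniv, ← (PiLp.volume_preserving_toLp (Fin 0)).measure_preimage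
      MeasurableSet.univ.nullMeasurableSet, preimage_univ, volume_pi, Measure.pi_univ]
    simp [omegaVol]
  · have : Nonempty (Fin d) := ⟨⟨0, hd⟩⟩
    rw [EuclideanSpace.volume_ball, ENNReal.ofReal_one, one_pow, one_mul, Fintype.card_fin,
      omegaVol, Real.sqrt_eq_rpow, ← Real.rpow_natCast, ← Real.rpow_mul Real.pi_pos.le, add_comm]
    ring_nf

theorem omegaVol_pos (d : ℕ) : 0 < omegaVol d :=
  div_pos (Real.rpow_pos_of_pos Real.pi_pos _) (Real.Gamma_pos_of_pos (by positivity))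

theorem ofReal_four_mul_pow_mul_omegaVol (d : ℕ) {r : ℝ} (hr : 0 < r) :
    ENNReal.ofReal ((4 * r) ^ d) * ENNReal.ofReal (omegaVol d) =
      ENNReal.ofReal (2 ^ (4 * d) / (omegaVol d * r ^ d)) *
        (ENNReal.ofReal ((r / 2) ^ d) * ENNReal.ofReal (omegaVol d)) ^ 2 := by
  have hω := omegaVol_pos d
  have hreal : (4 * r) ^ d * omegaVol d =
      2 ^ (4 * d) / (omegaVol d * r ^ d) * ((r / 2) ^ d * omegaVol d) ^ 2 := by
    rw [mul_pow, div_pow, show (4 : ℝ) = 2 ^ 2 by norm_num, ← pow_mul]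
    field_simp
    ring
  rw [← ENNReal.ofReal_mul (by positivity), hreal, ENNReal.ofReal_mul (by positivity),
    ENNReal.ofReal_pow (by positivity), ENNReal.ofReal_mul (by positivity)]

theorem smul_unitBall_eq_closedBall (d : ℕ) {r : ℝ} (hr : 0 ≤ r) :
    r • unitBall d = closedBall 0 r := by
  rw [unitBall, smul_unitClosedBall, Real.norm_of_nonneg hr]

theorem reverse_brunn_minkowski_parallel_sets_general
    (d : ℕ) (r : ℝ) (hr : 0 < r)
    (K L : Set (EuclideanSpace ℝ (Fin d)))
    (hK : IsCompact K) (hL : IsCompact L) :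
    volume ((K + r • unitBall d) + (L + r • unitBall d)) ≤
      volume (K + r • unitBall d) * volume (L + r • unitBall d) *
        ENNReal.ofReal (2 ^ (4 * d) / (omegaVol d * r ^ d)) := by
  have key := measure_add_add_closedBall_mul_sq_le volume hK hL hr
  rw [Measure.addHaar_ball_of_pos _ _ (half_pos hr), Measure.addHaar_closedBall _ _ (by positivity),
    finrank_euclideanSpace_fin, volume_ball_zero_one_eq_omegaVol,
    ofReal_four_mul_pow_mul_omegaVol d hr, ← mul_assoc] at key
  rw [smul_unitBall_eq_closedBall d hr.le]
  exact (ENNReal.mul_le_mul_iff_left (by simp [omegaVol_pos, hr])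
    (by simp [ENNReal.mul_eq_top])).mp key

/-- **reverse Brunn–Minkowski for parallel sets.** For `d ≥ 2`, `r > 0`
and nonempty compact `K, L ⊆ ℝ^d`,
`λ(K_{⊕r} ⊕ L_{⊕r}) ≤ λ(K_{⊕r}) · λ(L_{⊕r}) · 2^{4d}/(ω_d r^d)`. -/
theorem reverse_brunn_minkowski_parallel_sets
    (d : ℕ) (hd : 2 ≤ d) (r : ℝ) (hr : 0 < r)
    (K L : Set (EuclideanSpace ℝ (Fin d)))
    (hK : IsCompact K) (hKne : K.Nonempty) (hL : IsCompact L) (hLne : L.Nonempty) :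
    volume ((K + r • unitBall d) + (L + r • unitBall d)) ≤
      volume (K + r • unitBall d) * volume (L + r • unitBall d) *
        ENNReal.ofReal (2 ^ (4 * d) / (omegaVol d * r ^ d)) :=
  reverse_brunn_minkowski_parallel_sets_general d r hr K L hK hL
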